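/- Let 𝒢* = 𝒢*(Q₀) be the stopping family associated to a cube Q₀ ∈ 𝒬, a nonnegative locally integrable weight w, and a collection 𝒬 ⊂ 𝒟. Then for every R ∈ 𝒢*: (i) Σ_{Q∈𝒢*: Q⊂R} |Q| ≤ (4/3)|R|; (ii) ‖Σ_{Q∈𝒢*: Q⊂R} 1_Q‖_{L²(ℝ^d)} ≤ 2|R|^{1/2}. Moreover, the Carleson packing inequality (i) also holds for every R ∈ 𝒟. -/

import Mathlib

open MeasureTheory Set
open scoped ENNReal NNReal Classical

noncomputable section

/-- The translation parameter space `Ω = ({0,1}^d)^ℤ` for random dyadic lattices. -/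
abbrev TransParam (d : ℕ) := ℤ → Fin d → Bool

/-- A dyadic cube: scale `k` (side length `2^k`) and integer position `m`. -/
structure DyadicCube (d : ℕ) where
  k : ℤ
  m : Fin d → ℤ

namespace DyadicCube

variable {d : ℕ}

/-- The translation vector `Σ_{j<k} ω_j 2^j` of the lattice `𝒟_ω` at generation `k`. -/
def shiftVec (ω : TransParam d) (k : ℤ) (i : Fin d) : ℝ :=
  ∑' j : {j : ℤ // j < k}, if ω j.1 i then (2:ℝ) ^ (j.1 : ℤ) else 0

/-- The point set of the cube `Q` in the translated dyadic lattice `𝒟_ω`. -/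
def set (ω : TransParam d) (Q : DyadicCube d) : Set (Fin d → ℝ) :=
  {x | ∀ i, (Q.m i : ℝ) * 2 ^ Q.k + shiftVec ω Q.k i ≤ x i ∧
            x i < ((Q.m i : ℝ) + 1) * 2 ^ Q.k + shiftVec ω Q.k i}

/-- Side length `ℓ(Q) = 2^k`. -/
def len (Q : DyadicCube d) : ℝ := 2 ^ Q.k

/-- Volume `|Q| = ℓ(Q)^d`. -/
def vol (Q : DyadicCube d) : ℝ := ((2:ℝ) ^ Q.k) ^ d

/-- The dyadic cube of generation `k` of `𝒟_ω` containing the point `x`. -/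
def cubeAt (ω : TransParam d) (k : ℤ) (x : Fin d → ℝ) : DyadicCube d :=
  ⟨k, fun i => ⌊(x i - shiftVec ω k i) / 2 ^ k⌋⟩

/-- The average of `f` on `Q` with respect to `μ` (zero if `μ(Q)` is zero or infinite). -/
def avg (ω : TransParam d) (μ : Measure (Fin d → ℝ)) (Q : DyadicCube d)
    (f : (Fin d → ℝ) → ℝ) : ℝ :=
  ((μ (Q.set ω)).toReal)⁻¹ * ∫ x in Q.set ω, f x ∂μ

/-- The conditional expectation `E^μ_Q f`. -/
def eproj (ω : TransParam d) (μ : Measure (Fin d → ℝ)) (Q : DyadicCube d)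
    (f : (Fin d → ℝ) → ℝ) : (Fin d → ℝ) → ℝ :=
  fun x => if x ∈ Q.set ω then avg ω μ Q f else 0

/-- The martingale difference `Δ^μ_Q f = -E^μ_Q f + Σ_{J ∈ ch(Q)} E^μ_J f`. -/
def mdiff (ω : TransParam d) (μ : Measure (Fin d → ℝ)) (Q : DyadicCube d)
    (f : (Fin d → ℝ) → ℝ) : (Fin d → ℝ) → ℝ :=
  fun x => if x ∈ Q.set ω then
      avg ω μ (cubeAt ω (Q.k - 1) x) f - avg ω μ Q f
    else 0

end DyadicCube

/-- `h` takes equal values at points lying in the same generation-`k` cube of `𝒟_ω`. -/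
def ConstOnScale {d : ℕ} (ω : TransParam d) (k : ℤ) (h : (Fin d → ℝ) → ℝ) : Prop :=
  ∀ x y : Fin d → ℝ, DyadicCube.cubeAt ω k x = DyadicCube.cubeAt ω k y → h x = h y

/-- A generalized Haar function for `Q`: supported on `Q` and constant on the children of `Q`. -/
def IsGenHaar {d : ℕ} (ω : TransParam d) (Q : DyadicCube d) (h : (Fin d → ℝ) → ℝ) : Prop :=
  (∀ x ∉ Q.set ω, h x = 0) ∧ ConstOnScale ω (Q.k - 1) h

/-- A `μ`-weighted Haar function for `Q`: an element of the range of `Δ^μ_Q` in `L²(μ)`,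
i.e. supported on `Q`, constant on the children of `Q`, with `μ`-mean zero. -/
def IsWeightedHaar {d : ℕ} (ω : TransParam d) (μ : Measure (Fin d → ℝ)) (Q : DyadicCube d)
    (h : (Fin d → ℝ) → ℝ) : Prop :=
  IsGenHaar ω Q h ∧ (∫ x, h x ∂μ) = 0 ∧ MemLp h 2 μ

/-- An elementary generalized dyadic shift with parameters `mm`, `nn` on the lattice `𝒟_ω`:
for each cube `Q` (in `cubes`) and each pair `Q' Q'' ⊆ Q` with `ℓ(Q') = 2^{-mm} ℓ(Q)`,
`ℓ(Q'') = 2^{-nn} ℓ(Q)`, a pair of generalized Haar functions `h1 Q Q' Q''` (for `Q'`)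
and `h2 Q Q' Q''` (for `Q''`) with `‖h1‖_∞ ⬝ ‖h2‖_∞ ≤ 1`. -/
structure ElemShift (d : ℕ) (ω : TransParam d) (mm nn : ℕ) where
  cubes : Set (DyadicCube d)
  h1 : DyadicCube d → DyadicCube d → DyadicCube d → (Fin d → ℝ) → ℝ
  h2 : DyadicCube d → DyadicCube d → DyadicCube d → (Fin d → ℝ) → ℝ
  haar1 : ∀ Q Q' Q'', IsGenHaar ω Q' (h1 Q Q' Q'')
  haar2 : ∀ Q Q' Q'', IsGenHaar ω Q'' (h2 Q Q' Q'')
  normBound : ∀ Q Q' Q'' x y, |h2 Q Q' Q'' x| * |h1 Q Q' Q'' y| ≤ 1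

namespace ElemShift

variable {d : ℕ} {ω : TransParam d} {mm nn : ℕ}

/-- The kernel `a_Q(x,y) = Σ_{Q',Q''} h_{Q''}^{Q'}(x) h_{Q'}^{Q''}(y)` (so `‖a_Q‖_∞ ≤ 1`);
only the pair `Q' ∋ y`, `Q'' ∋ x` of the prescribed generations contributes. -/
def kernelAt (S : ElemShift d ω mm nn) (Q : DyadicCube d) (x y : Fin d → ℝ) : ℝ :=
  if Q ∈ S.cubes ∧
     (DyadicCube.cubeAt ω (Q.k - mm) y).set ω ⊆ Q.set ω ∧
     (DyadicCube.cubeAt ω (Q.k - nn) x).set ω ⊆ Q.set ω then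
    S.h2 Q (DyadicCube.cubeAt ω (Q.k - mm) y) (DyadicCube.cubeAt ω (Q.k - nn) x) x *
      S.h1 Q (DyadicCube.cubeAt ω (Q.k - mm) y) (DyadicCube.cubeAt ω (Q.k - nn) x) y
  else 0

/-- The full kernel `A(x,y) = Σ_Q |Q|⁻¹ a_Q(x,y)`. -/
def kernel (S : ElemShift d ω mm nn) (x y : Fin d → ℝ) : ℝ :=
  ∑' Q : DyadicCube d, (DyadicCube.vol Q)⁻¹ * S.kernelAt Q x y

/-- `𝕊_μ f (x) = ∫ A(x,y) f(y) dμ(y)`. -/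
def op (S : ElemShift d ω mm nn) (μ : Measure (Fin d → ℝ)) (f : (Fin d → ℝ) → ℝ) :
    (Fin d → ℝ) → ℝ :=
  fun x => ∫ y, S.kernel x y * f y ∂μ

/-- `𝕊^*_ν g (y) = ∫ A(x,y) g(x) dν(x)`. -/
def opStar (S : ElemShift d ω mm nn) (ν : Measure (Fin d → ℝ)) (g : (Fin d → ℝ) → ℝ) :
    (Fin d → ℝ) → ℝ :=
  fun y => ∫ x, S.kernel x y * g x ∂ν

/-- The restricted shift `𝕊_𝒜`, keeping only the cubes in `𝒜`. -/
def opRestr (S : ElemShift d ω mm nn) (𝒜 : Set (DyadicCube d)) (μ : Measure (Fin d → ℝ))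
    (f : (Fin d → ℝ) → ℝ) : (Fin d → ℝ) → ℝ :=
  fun x => ∫ y, (∑' Q : DyadicCube d,
    if Q ∈ 𝒜 then (DyadicCube.vol Q)⁻¹ * S.kernelAt Q x y else 0) * f y ∂μ

/-- The shift is ordinary (non-generalized): all its Haar functions have mean zero. -/
def Ordinary (S : ElemShift d ω mm nn) : Prop :=
  ∀ Q Q' Q'', (∫ x, S.h1 Q Q' Q'' x) = 0 ∧ (∫ x, S.h2 Q Q' Q'' x) = 0

end ElemShift

/-- The axis-parallel cube with corner `c` and side length `ℓ`. -/
def stdCube {d : ℕ} (c : Fin d → ℝ) (ℓ : ℝ) : Set (Fin d → ℝ) :=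
  {x | ∀ i, c i ≤ x i ∧ x i < c i + ℓ}

/-- `A` is an `A₂` bound for the weight `w`:
`(|Q|⁻¹∫_Q w)(|Q|⁻¹∫_Q w⁻¹) ≤ A` for all cubes `Q`. -/
def A2BoundOn {d : ℕ} (w : (Fin d → ℝ) → ℝ) (A : ℝ) : Prop :=
  ∀ (c : Fin d → ℝ) (ℓ : ℝ), 0 < ℓ →
    (∫⁻ x in stdCube c ℓ, ENNReal.ofReal (w x)) *
      (∫⁻ x in stdCube c ℓ, ENNReal.ofReal ((w x)⁻¹)) ≤
      ENNReal.ofReal A * ENNReal.ofReal (ℓ ^ d) * ENNReal.ofReal (ℓ ^ d)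

/-- `A` is a joint `A₂` bound for the pair of measures `μ`, `ν`:
`(μ(I)/|I|)(ν(I)/|I|) ≤ A` for all cubes `I`. -/
def JointA2 {d : ℕ} (μ ν : Measure (Fin d → ℝ)) (A : ℝ) : Prop :=
  ∀ (c : Fin d → ℝ) (ℓ : ℝ), 0 < ℓ →
    μ (stdCube c ℓ) * ν (stdCube c ℓ) ≤
      ENNReal.ofReal A * ENNReal.ofReal (ℓ ^ d) * ENNReal.ofReal (ℓ ^ d)

/-- Distance between two sets. -/
def setDist {α : Type*} [PseudoMetricSpace α] (S T : Set α) : ℝ :=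
  sInf ((fun p : α × α => dist p.1 p.2) '' (S ×ˢ T))

/-- The long distance `D(Q,R) = dist(Q,R) + ℓ(Q) + ℓ(R)`. -/
def longDist {d : ℕ} (ω : TransParam d) (Q R : DyadicCube d) : ℝ :=
  setDist (Q.set ω) (R.set ω) + Q.len + R.len

/-- A cube `Q ∈ 𝒟_ω` is bad (with parameters `r₀`, `γ`) if there is a much bigger cube
`R ∈ 𝒟_ω` with `dist(Q,R) < ℓ(Q)^γ ℓ(R)^{1-γ}`. -/
def IsBad {d : ℕ} (r₀ : ℕ) (γ : ℝ) (ω : TransParam d) (Q : DyadicCube d) : Prop :=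
  ∃ R : DyadicCube d, Q.k + (r₀ : ℤ) < R.k ∧
    setDist (Q.set ω) (R.set ω) < Q.len ^ γ * R.len ^ (1 - γ)

/-- `P` is the product over `ℤ` of uniform measures on `{0,1}^d`. -/
def IsBernoulliProduct {d : ℕ} (P : Measure (TransParam d)) : Prop :=
  IsProbabilityMeasure P ∧
  ∀ (F : Finset (ℤ × Fin d)) (b : ℤ × Fin d → Bool),
    P {ω | ∀ p ∈ F, ω p.1 p.2 = b p} = (1 / 2 : ℝ≥0∞) ^ F.card

/-- A Calderón–Zygmund operator on `ℝ^d` with parameters `Ccz`, `α` and unweighted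
`L²` norm at most `normT`. -/
structure CZO (d : ℕ) (Ccz α normT : ℝ) where
  T : ((Fin d → ℝ) → ℝ) →ₗ[ℝ] ((Fin d → ℝ) → ℝ)
  K : (Fin d → ℝ) → (Fin d → ℝ) → ℝ
  l2bound : ∀ f, eLpNorm (T f) 2 volume ≤ ENNReal.ofReal normT * eLpNorm f 2 volume
  size : ∀ x y, x ≠ y → |K x y| ≤ Ccz / dist x y ^ d
  smooth : ∀ x x' y : Fin d → ℝ, dist x x' < dist x y / 2 →
    |K x y - K x' y| + |K y x - K y x'| ≤ Ccz * dist x x' ^ α / dist x y ^ ((d : ℝ) + α)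
  repr : ∀ f : (Fin d → ℝ) → ℝ, Measurable f → HasCompactSupport f →
    (∃ M, ∀ y, |f y| ≤ M) → ∀ x ∉ tsupport f, T f x = ∫ y, K x y * f y

/-- The weighted paraproduct `Π^μ = Π^μ_𝕊 : L²(μ) → L²(ν)`,
`Π^μ f = Σ_{Q∈𝒟} (E^μ_Q f) Σ_{R ⊆ Q, ℓ(R)=2^{-r}ℓ(Q)} Δ^ν_R 𝕊_μ 1_Q`. -/
def shiftPara {d : ℕ} {ω : TransParam d} {mm nn : ℕ} (S : ElemShift d ω mm nn)
    (μ ν : Measure (Fin d → ℝ)) (r : ℕ) (f : (Fin d → ℝ) → ℝ) : (Fin d → ℝ) → ℝ :=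
  fun x => ∑' Q : DyadicCube d,
    DyadicCube.eproj ω μ Q f x *
      DyadicCube.mdiff ω ν (DyadicCube.cubeAt ω (Q.k - r) x)
        (S.op μ (Set.indicator (Q.set ω) fun _ => (1:ℝ))) x

/-- The density `w(Q)/|Q|` of the weight `w` on the cube `Q`. -/
def dens {d : ℕ} (ω : TransParam d) (w : (Fin d → ℝ) → ℝ) (Q : DyadicCube d) : ℝ :=
  (∫ x in Q.set ω, w x) / Q.vol

/-- The maximal cubes `Q' ∈ 𝒬`, `Q' ⊆ Q`, with `w(Q')/|Q'| > 4 w(Q)/|Q|`: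
the stopping children of `Q`. -/
def stopNext {d : ℕ} (ω : TransParam d) (w : (Fin d → ℝ) → ℝ) (𝒬 : Set (DyadicCube d))
    (Q : DyadicCube d) : Set (DyadicCube d) :=
  {Q' | (Q' ∈ 𝒬 ∧ Q'.set ω ⊆ Q.set ω ∧ 4 * dens ω w Q < dens ω w Q') ∧
    ∀ Q'' : DyadicCube d, Q'' ∈ 𝒬 → Q''.set ω ⊆ Q.set ω → 4 * dens ω w Q < dens ω w Q'' →
      Q'.set ω ⊆ Q''.set ω → Q''.set ω ⊆ Q'.set ω}

/-- The generations of stopping cubes: `𝒢*₀ = {Q₀}`, and `𝒢*_{τ+1}` consists of the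
stopping children of the cubes of `𝒢*_τ`. -/
def stopGen {d : ℕ} (ω : TransParam d) (w : (Fin d → ℝ) → ℝ) (𝒬 : Set (DyadicCube d))
    (Q₀ : DyadicCube d) : ℕ → Set (DyadicCube d)
  | 0 => {Q₀}
  | (τ + 1) => {Q' | ∃ Q ∈ stopGen ω w 𝒬 Q₀ τ, Q' ∈ stopNext ω w 𝒬 Q}

/-- The stopping family `𝒢* = 𝒢*(Q₀) = ∪_τ 𝒢*_τ`. -/
def stopFam {d : ℕ} (ω : TransParam d) (w : (Fin d → ℝ) → ℝ) (𝒬 : Set (DyadicCube d))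
    (Q₀ : DyadicCube d) : Set (DyadicCube d) :=
  ⋃ τ : ℕ, stopGen ω w 𝒬 Q₀ τ

/-- `𝒫(R) = 𝒬(R) \ ∪_{R'∈𝒢*, R'⊊R} 𝒬(R')`. -/
def stopP {d : ℕ} (ω : TransParam d) (w : (Fin d → ℝ) → ℝ) (𝒬 : Set (DyadicCube d))
    (Q₀ R : DyadicCube d) : Set (DyadicCube d) :=
  {Q | Q ∈ 𝒬 ∧ Q.set ω ⊆ R.set ω ∧
    ∀ R' ∈ stopFam ω w 𝒬 Q₀, R'.set ω ⊂ R.set ω → ¬ Q.set ω ⊆ R'.set ω}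

/-- The good part `f_{good,ω} = Σ_{I ∈ 𝒟_ω, I good} Δ_I f` of a function. -/
def goodPart {d : ℕ} (r₀ : ℕ) (γ : ℝ) (ω : TransParam d) (f : (Fin d → ℝ) → ℝ) :
    (Fin d → ℝ) → ℝ :=
  fun x => ∑' k : ℤ,
    if IsBad r₀ γ ω (DyadicCube.cubeAt ω k x) then 0
    else DyadicCube.mdiff ω volume (DyadicCube.cubeAt ω k x) f x

/-- Conditioning: keep the coordinates `ω_j`, `j < k`, from `τ` and take the coordinates
`ω_j`, `j ≥ k`, from `ω`. -/
def splice {d : ℕ} (τ ω : TransParam d) (k : ℤ) : TransParam d :=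
  fun j => if j < k then τ j else ω j

/-- The event `A` depends only on the coordinates `ω_j`, `j < k`. -/
def DependsOnPast {d : ℕ} (k : ℤ) (A : Set (TransParam d)) : Prop :=
  ∀ ω ω' : TransParam d, (∀ j < k, ω j = ω' j) → (ω ∈ A ↔ ω' ∈ A)

/-- `U` is a generalized dyadic shift with parameters `mm`, `nn` on the lattice `𝒟_ω`:
a sum of at most `4^d` elementary generalized dyadic shifts. -/
def IsGenShiftOp {d : ℕ} (ω : TransParam d) (mm nn : ℕ)
    (U : ((Fin d → ℝ) → ℝ) → ((Fin d → ℝ) → ℝ)) : Prop :=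
  ∃ L : List (ElemShift d ω mm nn), L.length ≤ 4 ^ d ∧
    ∀ f x, U f x = (L.map fun S => S.op volume f x).sum

/-- `U` is an ordinary (non-generalized) dyadic shift with parameters `mm`, `nn`:
a sum of at most `4^d` elementary dyadic shifts built from mean-zero Haar functions. -/
def IsOrdShiftOp {d : ℕ} (ω : TransParam d) (mm nn : ℕ)
    (U : ((Fin d → ℝ) → ℝ) → ((Fin d → ℝ) → ℝ)) : Prop :=
  ∃ L : List (ElemShift d ω mm nn), L.length ≤ 4 ^ d ∧ (∀ S ∈ L, S.Ordinary) ∧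
    ∀ f x, U f x = (L.map fun S => S.op volume f x).sum

/-- The dyadic paraproduct `Π f = Σ_Q (E_Q f) b_Q` with symbol `b = (b_Q)_Q = (Δ_Q T1)_Q`. -/
def paraOp {d : ℕ} (ω : TransParam d) (b : DyadicCube d → (Fin d → ℝ) → ℝ)
    (f : (Fin d → ℝ) → ℝ) : (Fin d → ℝ) → ℝ :=
  fun x => ∑' Q : DyadicCube d, DyadicCube.eproj ω volume Q f x * b Q x

/-- The adjoint `Π^*` of the dyadic paraproduct with symbol `b`:
`Π^* f = Σ_Q 1_Q |Q|⁻¹ ∫ f b_Q`. -/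
def paraOpAdj {d : ℕ} (ω : TransParam d) (b : DyadicCube d → (Fin d → ℝ) → ℝ)
    (f : (Fin d → ℝ) → ℝ) : (Fin d → ℝ) → ℝ :=
  fun x => ∑' Q : DyadicCube d,
    Set.indicator (Q.set ω) (fun _ => (1:ℝ)) x * (DyadicCube.vol Q)⁻¹ * (∫ y, f y * b Q y)

/-- `b = (b_Q)_Q` is the family `(Δ_Q T1)_Q` for the operator with adjoint `Tadj`:
each `b_Q` is supported on `Q`, constant on the children of `Q`, has mean zero, and
satisfies the duality relation `⟨b_Q, g⟩ = ⟨1, Tadj Δ_Q g⟩`. -/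
def IsParaSymbol {d : ℕ} (ω : TransParam d)
    (Tadj : ((Fin d → ℝ) → ℝ) → ((Fin d → ℝ) → ℝ))
    (b : DyadicCube d → (Fin d → ℝ) → ℝ) : Prop :=
  ∀ Q : DyadicCube d, IsGenHaar ω Q (b Q) ∧ (∫ x, b Q x) = 0 ∧
    ∀ g : (Fin d → ℝ) → ℝ, Measurable g → HasCompactSupport g → (∃ M, ∀ y, |g y| ≤ M) →
      (∫ x, b Q x * g x) = ∫ x, Tadj (DyadicCube.mdiff ω volume Q g) x

/-- `Tstar` is the adjoint of `T` on (unweighted) `L²`. -/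
def IsAdjointPair {d : ℕ} (T Tstar : ((Fin d → ℝ) → ℝ) → ((Fin d → ℝ) → ℝ)) : Prop :=
  ∀ f g : (Fin d → ℝ) → ℝ, MemLp f 2 volume → MemLp g 2 volume →
    (∫ x, T f x * g x) = ∫ x, f x * Tstar g x

/-- `T̃_ω = T - Π^ω_T - (Π^ω_{T*})^*`, where `b` plays the role of `(Δ_Q T1)_Q` and
`bstar` the role of `(Δ_Q T^*1)_Q`. -/
def tildeOp {d : ℕ} {Ccz α normT : ℝ} (Op : CZO d Ccz α normT) (ω : TransParam d)
    (b bstar : DyadicCube d → (Fin d → ℝ) → ℝ) (f : (Fin d → ℝ) → ℝ) : (Fin d → ℝ) → ℝ :=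
  fun x => Op.T f x - paraOp ω b f x - paraOpAdj ω bstar f x

/-!
A cube of `𝒢*` contained in `R` descends, through successive stopping generations, from one of
the maximal cubes of `𝒢*` inside `R`, and these are disjoint. The stopping children of a cube `C` are disjoint and each carries more than four
times the average of `w` over `C`, so together they occupy at most `|C|/4`; summing the
geometric series gives `(4/3)|R|`. For the `L²` bound, expanding the square leaves the measures
`|Q ∩ Q'|` of nested pairs, each charged to the smaller cube, and the packing bound applied twice
gives `2 (4/3)² |R| ≤ 4 |R|`.
-/

open Function

lemma mul_tsum_measure_le_of_pairwise_disjoint {α ι : Type*} [MeasurableSpace α] [Countable ι]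
    {μ ρ : Measure α} {A : ι → Set α} {C : Set α} {c : ℝ≥0∞} (hAC : ∀ i, A i ⊆ C)
    (hA : ∀ i, MeasurableSet (A i)) (hdisj : Pairwise (Disjoint on A))
    (h : ∀ i, c * μ (A i) ≤ ρ (A i)) : c * ∑' i, μ (A i) ≤ ρ C :=
  calc c * ∑' i, μ (A i) = ∑' i, c * μ (A i) := ENNReal.tsum_mul_left.symm
    _ ≤ ∑' i, ρ (A i) := ENNReal.tsum_le_tsum h
    _ = ρ (⋃ i, A i) := (measure_iUnion hdisj hA).symm
    _ ≤ ρ C := measure_mono (Set.iUnion_subset hAC)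

lemma lintegral_sq_tsum_indicator_one {α ι : Type*} [MeasurableSpace α] [Countable ι]
    (μ : Measure α) {s : ι → Set α} (hs : ∀ i, MeasurableSet (s i)) :
    ∫⁻ x, (∑' i, (s i).indicator (fun _ => (1 : ℝ≥0∞)) x) ^ 2 ∂μ =
      ∑' i, ∑' j, μ (s i ∩ s j) := by
  have hprod : ∀ i j x, (s i).indicator (fun _ => (1 : ℝ≥0∞)) x *
      (s j).indicator (fun _ => 1) x = (s i ∩ s j).indicator 1 x := fun i j x => by
    rw [← Set.inter_indicator_mul, one_mul, Pi.one_def]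
  have hmeas : ∀ i j, Measurable ((s i ∩ s j).indicator (1 : α → ℝ≥0∞)) := fun i j =>
    measurable_one.indicator ((hs i).inter (hs j))
  simp_rw [sq, ← ENNReal.tsum_mul_right, ← ENNReal.tsum_mul_left, hprod]
  rw [lintegral_tsum fun i => (Measurable.tsum (hmeas i)).aemeasurable]
  simp_rw [lintegral_tsum fun j => (hmeas _ j).aemeasurable,
    lintegral_indicator_one ((hs _).inter (hs _))]

lemma measure_inter_le_ite {α : Type*} [MeasurableSpace α] (μ : Measure α) {s t : Set α}
    (hst : ¬ Disjoint s t → s ⊆ t ∨ t ⊆ s) :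
    μ (s ∩ t) ≤ (if s ⊆ t then μ s else 0) + (if t ⊆ s then μ t else 0) := by
  by_cases hs : s ⊆ t
  · rw [if_pos hs]
    exact (measure_mono Set.inter_subset_left).trans le_self_add
  by_cases ht : t ⊆ s
  · rw [if_neg hs, if_pos ht, zero_add]
    exact measure_mono Set.inter_subset_right
  have hdisj : Disjoint s t := by_contra fun h => (hst h).elim hs ht
  simp [hdisj.inter_eq]

lemma tsum_subtype_ite_le {α : Type*} {p q r : α → Prop} [DecidablePred r] (f : α → ℝ≥0∞)
    (h : ∀ a, p a → r a → q a) :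
    ∑' a : {a // p a}, (if r a then f a else 0) ≤ ∑' a : {a // q a}, f a := by
  refine ((tsum_subtype {a | p a} fun a => if r a then f a else 0).trans_le ?_).trans_eq
    (tsum_subtype {a | q a} f).symm
  refine ENNReal.tsum_le_tsum fun a => ?_
  by_cases hp : p a <;> by_cases hr : r a <;> simp [Set.indicator, hp, hr, h a]

lemma Ico_subset_Ico_of_mem {a b h x : ℝ} {n N : ℤ} (hh : 0 < h) (hb : b = a + n * h)
    (hxa : x ∈ Set.Ico a (a + h)) (hxb : x ∈ Set.Ico b (b + N * h)) :
    Set.Ico a (a + h) ⊆ Set.Ico b (b + N * h) := by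
  obtain ⟨hax, hxa⟩ := hxa
  obtain ⟨hbx, hxb⟩ := hxb
  have hn : (n : ℝ) * h < 1 * h := by linarith
  have hnN : ((-n : ℤ) : ℝ) * h < N * h := by push_cast; linarith
  replace hn : n < 1 := by exact_mod_cast lt_of_mul_lt_mul_right hn hh.le
  replace hnN : -n < N := by exact_mod_cast lt_of_mul_lt_mul_right hnN hh.le
  have hn' : (n : ℝ) ≤ 0 := by exact_mod_cast (by omega : n ≤ 0)
  have hnN' : (1 : ℝ) - n ≤ N := by exact_mod_cast (by omega : 1 - n ≤ N)
  exact Set.Ico_subset_Ico (by nlinarith) (by nlinarith)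

namespace DyadicCube

variable {d : ℕ}

instance : Countable (DyadicCube d) :=
  Function.Injective.countable (f := fun Q : DyadicCube d => (Q.k, Q.m))
    fun ⟨_, _⟩ ⟨_, _⟩ h => by simpa using h

def natEquivLT (k : ℤ) : ℕ ≃ {j : ℤ // j < k} where
  toFun n := ⟨k - 1 - n, by omega⟩
  invFun j := (k - 1 - j.1).toNat
  left_inv n := by simp
  right_inv j := Subtype.ext (by simp only; omega)

lemma shiftVec_eq_tsum_nat (ω : TransParam d) (k : ℤ) (i : Fin d) :
    shiftVec ω k i = ∑' n : ℕ, if ω (k - 1 - n) i then (2 : ℝ) ^ (k - 1 - n) else 0 :=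
  ((natEquivLT k).tsum_eq fun j => if ω j.1 i then (2 : ℝ) ^ j.1 else 0).symm

lemma shiftVec_succ (ω : TransParam d) (k : ℤ) (i : Fin d) :
    shiftVec ω (k + 1) i = (if ω k i then (2 : ℝ) ^ k else 0) + shiftVec ω k i := by
  have hsum : Summable fun n : ℕ => if ω (k - n) i then (2 : ℝ) ^ (k - n) else 0 := by
    refine Summable.of_nonneg_of_le (fun n => by split_ifs <;> positivity) (fun n => ?_)
      ((summable_geometric_two).mul_left ((2 : ℝ) ^ k))
    have : (2 : ℝ) ^ (k - n) = 2 ^ k * (1 / 2) ^ n := by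
      rw [zpow_sub₀ two_ne_zero, zpow_natCast, div_eq_mul_inv, one_div, inv_pow]
    split_ifs <;> [exact this.le; positivity]
  rw [shiftVec_eq_tsum_nat, shiftVec_eq_tsum_nat]
  simp only [add_sub_cancel_right] at hsum ⊢
  rw [hsum.tsum_eq_zero_add]
  simp only [Nat.cast_zero, sub_zero, Nat.cast_add, Nat.cast_one, sub_add_eq_sub_sub_swap]

lemma exists_shiftVec_eq_add_int_mul (ω : TransParam d) (i : Fin d) {k k' : ℤ} (hk : k ≤ k') :
    ∃ t : ℤ, shiftVec ω k' i = shiftVec ω k i + t * 2 ^ k := by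
  induction k', hk using Int.leInduction with
  | base => exact ⟨0, by simp⟩
  | succ n hkn ih =>
    obtain ⟨t, ht⟩ := ih
    refine ⟨(if ω n i then 2 ^ (n - k).toNat else 0) + t, ?_⟩
    have h2 : (2 : ℝ) ^ n = 2 ^ (n - k).toNat * 2 ^ k := by
      rw [← zpow_natCast, Int.toNat_of_nonneg (by omega), ← zpow_add₀ two_ne_zero, sub_add_cancel]
    rw [shiftVec_succ, ht]
    split_ifs <;> push_cast <;> [linear_combination h2; ring]

def corner (ω : TransParam d) (Q : DyadicCube d) (i : Fin d) : ℝ :=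
  Q.m i * 2 ^ Q.k + shiftVec ω Q.k i

lemma set_eq_pi (ω : TransParam d) (Q : DyadicCube d) :
    Q.set ω = Set.univ.pi fun i => Set.Ico (corner ω Q i) (corner ω Q i + 2 ^ Q.k) := by
  ext x
  simp only [DyadicCube.set, corner, Set.mem_univ_pi, Set.mem_Ico]
  refine forall_congr' fun i => and_congr_right' ?_
  rw [add_one_mul, add_right_comm]

lemma corner_mem_set (ω : TransParam d) (Q : DyadicCube d) : corner ω Q ∈ Q.set ω := by
  rw [set_eq_pi]
  exact fun i _ => ⟨le_rfl, lt_add_of_pos_right _ (by positivity)⟩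

lemma measurableSet_set (ω : TransParam d) (Q : DyadicCube d) : MeasurableSet (Q.set ω) := by
  rw [set_eq_pi]
  exact .univ_pi fun _ => measurableSet_Ico

lemma vol_pos (Q : DyadicCube d) : 0 < Q.vol := by
  unfold vol
  positivity

lemma volume_set (ω : TransParam d) (Q : DyadicCube d) :
    volume (Q.set ω) = ENNReal.ofReal Q.vol := by
  rw [set_eq_pi, Real.volume_pi_Ico, vol, ENNReal.ofReal_pow (by positivity)]
  simp

lemma integrableOn_set {w : (Fin d → ℝ) → ℝ} (hw : LocallyIntegrable w volume)
    (ω : TransParam d) (Q : DyadicCube d) : IntegrableOn w (Q.set ω) := by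
  refine (hw.integrableOn_isCompact (isCompact_univ_pi fun i =>
    isCompact_Icc (a := corner ω Q i) (b := corner ω Q i + 2 ^ Q.k))).mono_set ?_
  rw [set_eq_pi]
  exact Set.pi_mono fun _ _ => Set.Ico_subset_Icc_self

/-- The corners of the two cubes differ by a multiple of the smaller side length. -/
lemma set_subset_set_of_k_le {ω : TransParam d} {Q R : DyadicCube d} {x : Fin d → ℝ}
    (hk : Q.k ≤ R.k) (hxQ : x ∈ Q.set ω) (hxR : x ∈ R.set ω) : Q.set ω ⊆ R.set ω := by
  rw [set_eq_pi] at hxQ hxR ⊢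
  rw [set_eq_pi]
  refine Set.pi_mono fun i _ => ?_
  obtain ⟨t, ht⟩ := exists_shiftVec_eq_add_int_mul ω i hk
  have hN : (2 : ℝ) ^ R.k = (2 ^ (R.k - Q.k).toNat : ℤ) * 2 ^ Q.k := by
    rw [Int.cast_pow, Int.cast_ofNat, ← zpow_natCast, Int.toNat_of_nonneg (by omega),
      ← zpow_add₀ two_ne_zero, sub_add_cancel]
  rw [hN] at hxR ⊢
  refine Ico_subset_Ico_of_mem (n := R.m i * 2 ^ (R.k - Q.k).toNat + t - Q.m i) (by positivity)
    ?_ (hxQ i trivial) (hxR i trivial)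
  simp only [corner, ht, hN]
  push_cast
  ring

lemma set_subset_or_subset_of_not_disjoint {ω : TransParam d} {Q R : DyadicCube d}
    (h : ¬ Disjoint (Q.set ω) (R.set ω)) : Q.set ω ⊆ R.set ω ∨ R.set ω ⊆ Q.set ω := by
  obtain ⟨x, hxQ, hxR⟩ := Set.not_disjoint_iff.mp h
  rcases le_total Q.k R.k with hk | hk
  exacts [.inl (set_subset_set_of_k_le hk hxQ hxR), .inr (set_subset_set_of_k_le hk hxR hxQ)]

lemma k_le_of_set_subset (hd : 0 < d) {ω : TransParam d} {Q R : DyadicCube d}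
    (h : Q.set ω ⊆ R.set ω) : Q.k ≤ R.k := by
  have hvol := measure_mono (μ := volume) h
  rw [volume_set, volume_set, ENNReal.ofReal_le_ofReal_iff R.vol_pos.le, vol, vol,
    pow_le_pow_iff_left₀ (by positivity) (by positivity) hd.ne'] at hvol
  exact (zpow_le_zpow_iff_right₀ one_lt_two).mp hvol

lemma set_injective (hd : 0 < d) (ω : TransParam d) :
    Function.Injective fun Q : DyadicCube d => Q.set ω := by
  intro Q R (h : Q.set ω = R.set ω)
  have hk : Q.k = R.k := le_antisymm (k_le_of_set_subset hd h.le) (k_le_of_set_subset hd h.ge)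
  have hQR := h ▸ corner_mem_set ω Q
  have hRQ := h.symm ▸ corner_mem_set ω R
  rw [set_eq_pi] at hQR hRQ
  have hm : Q.m = R.m := funext fun i => by
    have h1 := (hQR i trivial).2
    have h2 := (hRQ i trivial).2
    simp only [corner, hk] at h1 h2
    have hpos := zpow_pos (two_pos (α := ℝ)) R.k
    have h3 : Q.m i < R.m i + 1 := by exact_mod_cast (by nlinarith : (Q.m i : ℝ) < R.m i + 1)
    have h4 : R.m i < Q.m i + 1 := by exact_mod_cast (by nlinarith : (R.m i : ℝ) < Q.m i + 1)
    omega
  cases Q; cases R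
  simp_all

lemma k_lt_of_set_ssubset (hd : 0 < d) {ω : TransParam d} {Q R : DyadicCube d}
    (h : Q.set ω ⊂ R.set ω) : Q.k < R.k :=
  (k_le_of_set_subset hd h.subset).lt_of_ne fun hk => h.not_superset <|
    set_subset_set_of_k_le hk.ge (h.subset (corner_mem_set ω Q)) (corner_mem_set ω Q)

/-- Well founded since a cube has only finitely many strict supercubes inside `S`. -/
lemma subset_induction (hd : 0 < d) {ω : TransParam d} (S : DyadicCube d)
    {P : DyadicCube d → Prop}
    (h : ∀ R, R.set ω ⊆ S.set ω → (∀ R', R.set ω ⊂ R'.set ω → R'.set ω ⊆ S.set ω → P R') → P R)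
    (R : DyadicCube d) (hR : R.set ω ⊆ S.set ω) : P R := by
  induction hn : (S.k - R.k).toNat using Nat.strong_induction_on generalizing R with
  | _ n ih =>
    refine h R hR fun R' hRR' hR'S => ih _ ?_ R' hR'S rfl
    have := k_lt_of_set_ssubset hd hRR'
    have := k_le_of_set_subset hd hR'S
    omega

end DyadicCube

section Stopping

variable {d : ℕ} {ω : TransParam d} {w : (Fin d → ℝ) → ℝ} {𝒬 : Set (DyadicCube d)}
  {Q₀ : DyadicCube d}

open DyadicCube

lemma dens_nonneg (hw : ∀ x, 0 ≤ w x) (Q : DyadicCube d) : 0 ≤ dens ω w Q :=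
  div_nonneg (setIntegral_nonneg (measurableSet_set ω Q) fun x _ => hw x) Q.vol_pos.le

lemma withDensity_ofReal_set (hw : ∀ x, 0 ≤ w x) (hwl : LocallyIntegrable w volume)
    (Q : DyadicCube d) :
    volume.withDensity (fun x => ENNReal.ofReal (w x)) (Q.set ω) =
      ENNReal.ofReal (dens ω w Q) * volume (Q.set ω) := by
  rw [withDensity_apply _ (measurableSet_set ω Q),
    ← ofReal_integral_eq_lintegral_ofReal (integrableOn_set hwl ω Q) (ae_of_all _ hw),
    volume_set, ← ENNReal.ofReal_mul (dens_nonneg hw Q), dens, div_mul_cancel₀ _ Q.vol_pos.ne']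

lemma set_ssubset_of_mem_stopNext (hd : 0 < d) (hw : ∀ x, 0 ≤ w x) {Q C : DyadicCube d}
    (h : Q ∈ stopNext ω w 𝒬 C) : Q.set ω ⊂ C.set ω :=
  h.1.2.1.ssubset_of_ne fun hQC => by
    have hdens := h.1.2.2
    rw [set_injective hd ω hQC] at hdens
    linarith [dens_nonneg (ω := ω) hw C]

lemma disjoint_of_mem_stopNext (hd : 0 < d) {C Q Q' : DyadicCube d}
    (hQ : Q ∈ stopNext ω w 𝒬 C) (hQ' : Q' ∈ stopNext ω w 𝒬 C) (hne : Q ≠ Q') :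
    Disjoint (Q.set ω) (Q'.set ω) := by
  by_contra h
  refine hne (set_injective hd ω ?_)
  rcases set_subset_or_subset_of_not_disjoint h with h | h
  · exact h.antisymm (hQ.2 Q' hQ'.1.1 hQ'.1.2.1 hQ'.1.2.2 h)
  · exact (hQ'.2 Q hQ.1.1 hQ.1.2.1 hQ.1.2.2 h).antisymm h

lemma dens_pos_of_mem_stopNext (hw : ∀ x, 0 ≤ w x) (hwl : LocallyIntegrable w volume)
    {C Q : DyadicCube d} (hQ : Q ∈ stopNext ω w 𝒬 C) : 0 < dens ω w C := by
  refine (dens_nonneg hw C).lt_of_ne fun hC => ?_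
  have hmono := measure_mono (μ := volume.withDensity fun x => ENNReal.ofReal (w x)) hQ.1.2.1
  rw [withDensity_ofReal_set hw hwl, withDensity_ofReal_set hw hwl, ← hC, ENNReal.ofReal_zero,
    zero_mul, nonpos_iff_eq_zero, mul_eq_zero, ENNReal.ofReal_eq_zero, volume_set,
    ENNReal.ofReal_eq_zero] at hmono
  have := hQ.1.2.2
  rcases hmono with h | h
  · linarith
  · linarith [Q.vol_pos]

lemma four_mul_tsum_volume_stopNext_le (hd : 0 < d) (hw : ∀ x, 0 ≤ w x)
    (hwl : LocallyIntegrable w volume) (C : DyadicCube d) :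
    4 * ∑' Q : stopNext ω w 𝒬 C, volume (Q.1.set ω) ≤ volume (C.set ω) := by
  rcases (stopNext ω w 𝒬 C).eq_empty_or_nonempty with h | ⟨Q, hQ⟩
  · simp [h]
  have hC := ENNReal.ofReal_pos.mpr (dens_pos_of_mem_stopNext hw hwl hQ)
  rw [← ENNReal.mul_le_mul_iff_right hC.ne' ENNReal.ofReal_ne_top, ← mul_assoc,
    ← withDensity_ofReal_set hw hwl]
  refine mul_tsum_measure_le_of_pairwise_disjoint (fun Q => Q.2.1.2.1)
    (fun Q => measurableSet_set ω Q.1)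
    (fun Q Q' hne => disjoint_of_mem_stopNext hd Q.2 Q'.2 (Subtype.coe_ne_coe.mpr hne))
    fun Q => ?_
  rw [withDensity_ofReal_set hw hwl, mul_comm _ (4 : ℝ≥0∞), ← ENNReal.ofReal_ofNat 4,
    ← ENNReal.ofReal_mul (by norm_num)]
  gcongr
  exact Q.2.1.2.2.le

lemma set_subset_of_mem_stopGen :
    ∀ {τ : ℕ} {Q : DyadicCube d}, Q ∈ stopGen ω w 𝒬 Q₀ τ → Q.set ω ⊆ Q₀.set ω
  | 0, _, rfl => subset_rfl
  | _ + 1, _, ⟨_, hC, hQC⟩ => hQC.1.2.1.trans (set_subset_of_mem_stopGen hC)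

lemma set_subset_of_mem_stopFam {Q : DyadicCube d} (hQ : Q ∈ stopFam ω w 𝒬 Q₀) :
    Q.set ω ⊆ Q₀.set ω :=
  let ⟨_, hτ⟩ := Set.mem_iUnion.mp hQ
  set_subset_of_mem_stopGen hτ

lemma exists_mem_stopNext_of_mem_stopFam {Q : DyadicCube d} (hQ : Q ∈ stopFam ω w 𝒬 Q₀)
    (hne : Q ≠ Q₀) : ∃ C ∈ stopFam ω w 𝒬 Q₀, Q ∈ stopNext ω w 𝒬 C := by
  obtain ⟨_ | τ, hτ⟩ := Set.mem_iUnion.mp hQ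
  · exact absurd hτ hne
  · obtain ⟨C, hC, hQC⟩ := hτ
    exact ⟨C, Set.mem_iUnion.mpr ⟨τ, hC⟩, hQC⟩

/-- A cube `R` of `𝒢*` strictly between `Q` and `C` has a stopping parent `B`, and comparing `B`
with `C` either contradicts the maximality of `Q` (when `B = C`) or gives the same configuration
with a larger middle cube. -/
lemma set_subset_of_mem_stopNext_of_ssubset (hd : 0 < d) (hw : ∀ x, 0 ≤ w x)
    {C Q R : DyadicCube d} (hC : C ∈ stopFam ω w 𝒬 Q₀) (hQC : Q ∈ stopNext ω w 𝒬 C)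
    (hR : R ∈ stopFam ω w 𝒬 Q₀) (hQR : Q.set ω ⊂ R.set ω) : C.set ω ⊆ R.set ω := by
  revert C Q
  refine subset_induction hd Q₀ (P := fun R => R ∈ stopFam ω w 𝒬 Q₀ → ∀ {C Q : DyadicCube d},
      C ∈ stopFam ω w 𝒬 Q₀ → Q ∈ stopNext ω w 𝒬 C → Q.set ω ⊂ R.set ω → C.set ω ⊆ R.set ω)
    (fun R _ ih hR C Q hC hQC hQR => ?_) R (set_subset_of_mem_stopFam hR) hR
  by_contra hCR
  have hRC : R.set ω ⊂ C.set ω :=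
    ((set_subset_or_subset_of_not_disjoint (Set.not_disjoint_iff.mpr ⟨corner ω Q,
      hQC.1.2.1 (corner_mem_set ω Q), hQR.subset (corner_mem_set ω Q)⟩)).resolve_left
        hCR).ssubset_of_not_superset hCR
  have hRQ₀ : R ≠ Q₀ := by
    rintro rfl
    exact hRC.not_superset (set_subset_of_mem_stopFam hC)
  obtain ⟨B, hB, hRB⟩ := exists_mem_stopNext_of_mem_stopFam hR hRQ₀
  have hRB' := set_ssubset_of_mem_stopNext hd hw hRB
  by_cases hBC : B.set ω ⊆ C.set ω
  · rcases hBC.eq_or_ssubset with hBC | hBC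
    · rw [set_injective hd ω hBC] at hRB
      exact hQR.not_superset (hQC.2 R hRB.1.1 hRB.1.2.1 hRB.1.2.2 hQR.subset)
    · exact hBC.not_superset
        (ih B hRB' (set_subset_of_mem_stopFam hB) hB hC hQC (hQR.trans hRB'))
  · have hCB : C.set ω ⊂ B.set ω :=
      ((set_subset_or_subset_of_not_disjoint (Set.not_disjoint_iff.mpr ⟨corner ω R,
        hRC.subset (corner_mem_set ω R), hRB'.subset (corner_mem_set ω R)⟩)).resolve_right
          hBC).ssubset_of_not_superset hBC
    exact hBC (ih C hRC (set_subset_of_mem_stopFam hC) hC hB hRB hRC)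

/-- The maximal cubes of `𝒢*` contained in `R`, described through their stopping parents. -/
def stopTop (ω : TransParam d) (w : (Fin d → ℝ) → ℝ) (𝒬 : Set (DyadicCube d))
    (Q₀ R : DyadicCube d) : Set (DyadicCube d) :=
  {P | P ∈ stopFam ω w 𝒬 Q₀ ∧ P.set ω ⊆ R.set ω ∧
    ∀ C ∈ stopFam ω w 𝒬 Q₀, P ∈ stopNext ω w 𝒬 C → ¬ C.set ω ⊆ R.set ω}

def stopDesc (ω : TransParam d) (w : (Fin d → ℝ) → ℝ) (𝒬 : Set (DyadicCube d))
    (𝒯 : Set (DyadicCube d)) : ℕ → Set (DyadicCube d)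
  | 0 => 𝒯
  | n + 1 => ⋃ C ∈ stopDesc ω w 𝒬 𝒯 n, stopNext ω w 𝒬 C

lemma eq_of_mem_stopTop_of_subset (hd : 0 < d) (hw : ∀ x, 0 ≤ w x) {R P P' : DyadicCube d}
    (hP : P ∈ stopTop ω w 𝒬 Q₀ R) (hP' : P' ∈ stopTop ω w 𝒬 Q₀ R)
    (h : P.set ω ⊆ P'.set ω) : P = P' := by
  by_contra hne
  have hPP' : P.set ω ⊂ P'.set ω := h.ssubset_of_ne fun e => hne (set_injective hd ω e)
  have hPQ₀ : P ≠ Q₀ := by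
    rintro rfl
    exact hPP'.not_superset (set_subset_of_mem_stopFam hP'.1)
  obtain ⟨C, hC, hPC⟩ := exists_mem_stopNext_of_mem_stopFam hP.1 hPQ₀
  exact hP.2.2 C hC hPC
    ((set_subset_of_mem_stopNext_of_ssubset hd hw hC hPC hP'.1 hPP').trans hP'.2.1)

lemma tsum_volume_stopTop_le (hd : 0 < d) (hw : ∀ x, 0 ≤ w x) (R : DyadicCube d) :
    ∑' P : stopTop ω w 𝒬 Q₀ R, volume (P.1.set ω) ≤ volume (R.set ω) := by
  refine (one_mul (∑' P : stopTop ω w 𝒬 Q₀ R, volume (P.1.set ω))).symm.trans_le <|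
    mul_tsum_measure_le_of_pairwise_disjoint (fun P => P.2.2.1) (fun P => measurableSet_set ω P.1)
      (fun P P' hne => ?_) fun P => (one_mul _).le
  by_contra h
  rcases set_subset_or_subset_of_not_disjoint h with h | h
  exacts [hne (Subtype.ext (eq_of_mem_stopTop_of_subset hd hw P.2 P'.2 h)),
    hne (Subtype.ext (eq_of_mem_stopTop_of_subset hd hw P'.2 P.2 h).symm)]

lemma tsum_volume_stopDesc_le (hd : 0 < d) (hw : ∀ x, 0 ≤ w x)
    (hwl : LocallyIntegrable w volume) (𝒯 : Set (DyadicCube d)) (n : ℕ) :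
    ∑' Q : stopDesc ω w 𝒬 𝒯 n, volume (Q.1.set ω) ≤ 4⁻¹ ^ n * ∑' Q : 𝒯, volume (Q.1.set ω) := by
  induction n with
  | zero => simp [stopDesc]
  | succ n ih =>
    calc ∑' Q : stopDesc ω w 𝒬 𝒯 (n + 1), volume (Q.1.set ω)
        ≤ 4⁻¹ * ∑' (C : stopDesc ω w 𝒬 𝒯 n), 4 * ∑' Q : stopNext ω w 𝒬 C, volume (Q.1.set ω) := by
          rw [ENNReal.tsum_mul_left, ← mul_assoc,
            ENNReal.inv_mul_cancel (by norm_num) (by norm_num), one_mul]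
          exact ENNReal.tsum_biUnion_le_tsum (fun Q => volume (Q.set ω)) _ (stopNext ω w 𝒬)
      _ ≤ 4⁻¹ * ∑' C : stopDesc ω w 𝒬 𝒯 n, volume (C.1.set ω) := by
          gcongr with C
          exact four_mul_tsum_volume_stopNext_le hd hw hwl C
      _ ≤ 4⁻¹ ^ (n + 1) * ∑' Q : 𝒯, volume (Q.1.set ω) := by
          rw [pow_succ', mul_assoc]
          gcongr

lemma exists_mem_stopDesc_stopTop (hd : 0 < d) (hw : ∀ x, 0 ≤ w x) {Q R : DyadicCube d}
    (hQ : Q ∈ stopFam ω w 𝒬 Q₀) (hQR : Q.set ω ⊆ R.set ω) :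
    ∃ n, Q ∈ stopDesc ω w 𝒬 (stopTop ω w 𝒬 Q₀ R) n := by
  revert hQR
  refine subset_induction hd Q₀ (P := fun Q => Q ∈ stopFam ω w 𝒬 Q₀ → Q.set ω ⊆ R.set ω →
      ∃ n, Q ∈ stopDesc ω w 𝒬 (stopTop ω w 𝒬 Q₀ R) n)
    (fun Q _ ih hQ hQR => ?_) Q (set_subset_of_mem_stopFam hQ) hQ
  by_cases htop : Q ∈ stopTop ω w 𝒬 Q₀ R
  · exact ⟨0, htop⟩
  obtain ⟨C, hC, hQC, hCR⟩ : ∃ C ∈ stopFam ω w 𝒬 Q₀, Q ∈ stopNext ω w 𝒬 C ∧ C.set ω ⊆ R.set ω := by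
    simpa [stopTop, hQ, hQR] using htop
  obtain ⟨n, hn⟩ :=
    ih C (set_ssubset_of_mem_stopNext hd hw hQC) (set_subset_of_mem_stopFam hC) hC hCR
  exact ⟨n + 1, Set.mem_biUnion hn hQC⟩

lemma tsum_geometric_inv_four : ∑' n : ℕ, (4⁻¹ : ℝ≥0∞) ^ n = 4 / 3 := by
  have h : (1 - 4⁻¹ : ℝ≥0∞) = 3 / 4 := by
    rw [← ENNReal.toReal_eq_toReal_iff' (by simp) (ENNReal.div_ne_top (by simp) (by simp)),
      ENNReal.toReal_sub_of_le (by simp) (by simp)]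
    norm_num
  rw [ENNReal.tsum_geometric, h, ENNReal.inv_div (by simp) (by simp)]

theorem tsum_volume_stopFam_le (hd : 0 < d) (hw : ∀ x, 0 ≤ w x)
    (hwl : LocallyIntegrable w volume) (R : DyadicCube d) :
    ∑' Q : {Q // Q ∈ stopFam ω w 𝒬 Q₀ ∧ Q.set ω ⊆ R.set ω}, volume (Q.1.set ω) ≤
      4 / 3 * volume (R.set ω) :=
  calc ∑' Q : {Q // Q ∈ stopFam ω w 𝒬 Q₀ ∧ Q.set ω ⊆ R.set ω}, volume (Q.1.set ω)
      ≤ ∑' Q : ⋃ n, stopDesc ω w 𝒬 (stopTop ω w 𝒬 Q₀ R) n, volume (Q.1.set ω) :=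
        ENNReal.tsum_mono_subtype (fun Q => volume (Q.set ω)) fun Q hQ =>
          Set.mem_iUnion.mpr (exists_mem_stopDesc_stopTop hd hw hQ.1 hQ.2)
    _ ≤ ∑' (n) (Q : stopDesc ω w 𝒬 (stopTop ω w 𝒬 Q₀ R) n), volume (Q.1.set ω) :=
        ENNReal.tsum_iUnion_le_tsum (fun Q : DyadicCube d => volume (Q.set ω)) _
    _ ≤ ∑' n : ℕ, 4⁻¹ ^ n * volume (R.set ω) := ENNReal.tsum_le_tsum fun n =>
        (tsum_volume_stopDesc_le hd hw hwl _ n).trans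
          (by gcongr; exact tsum_volume_stopTop_le hd hw R)
    _ = 4 / 3 * volume (R.set ω) := by rw [ENNReal.tsum_mul_right, tsum_geometric_inv_four]

theorem lintegral_sq_tsum_indicator_stopFam_le (hd : 0 < d) (hw : ∀ x, 0 ≤ w x)
    (hwl : LocallyIntegrable w volume) (R : DyadicCube d) :
    ∫⁻ x, (∑' Q : {Q // Q ∈ stopFam ω w 𝒬 Q₀ ∧ Q.set ω ⊆ R.set ω},
      (Q.1.set ω).indicator (fun _ => (1 : ℝ≥0∞)) x) ^ 2 ≤ 4 * volume (R.set ω) := by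
  set T := {Q // Q ∈ stopFam ω w 𝒬 Q₀ ∧ Q.set ω ⊆ R.set ω}
  set X := ∑' (a : T) (b : T), if a.1.set ω ⊆ b.1.set ω then volume (a.1.set ω) else 0
  have hX : X ≤ 4 / 3 * (4 / 3 * volume (R.set ω)) :=
    calc X = ∑' (b : T) (a : T), if a.1.set ω ⊆ b.1.set ω then volume (a.1.set ω) else 0 :=
          ENNReal.tsum_comm
      _ ≤ ∑' b : T, 4 / 3 * volume (b.1.set ω) := ENNReal.tsum_le_tsum fun b =>
          (tsum_subtype_ite_le (fun a : DyadicCube d => volume (a.set ω)) fun _ ha hab =>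
            ⟨ha.1, hab⟩).trans (tsum_volume_stopFam_le hd hw hwl b.1)
      _ ≤ 4 / 3 * (4 / 3 * volume (R.set ω)) := by
          rw [ENNReal.tsum_mul_left]
          gcongr
          exact tsum_volume_stopFam_le hd hw hwl R
  calc ∫⁻ x, (∑' Q : T, (Q.1.set ω).indicator (fun _ => (1 : ℝ≥0∞)) x) ^ 2
      = ∑' (a : T) (b : T), volume (a.1.set ω ∩ b.1.set ω) :=
        lintegral_sq_tsum_indicator_one _ fun Q => measurableSet_set ω Q.1
    _ ≤ ∑' (a : T) (b : T), ((if a.1.set ω ⊆ b.1.set ω then volume (a.1.set ω) else 0) +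
          if b.1.set ω ⊆ a.1.set ω then volume (b.1.set ω) else 0) :=
        ENNReal.tsum_le_tsum fun a => ENNReal.tsum_le_tsum fun b =>
          measure_inter_le_ite _ set_subset_or_subset_of_not_disjoint
    _ = X + X := by
        simp only [ENNReal.tsum_add]
        rw [ENNReal.tsum_comm (f := fun a b : T =>
          if b.1.set ω ⊆ a.1.set ω then volume (b.1.set ω) else 0)]
    _ ≤ 2 * (4 / 3 * (4 / 3)) * volume (R.set ω) := by
        rw [← two_mul, mul_assoc, mul_assoc]
        gcongr
    _ ≤ 4 * volume (R.set ω) := by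
        gcongr
        rw [← ENNReal.toReal_le_toReal (by simp [ENNReal.mul_eq_top, ENNReal.div_eq_top])
          (by simp)]
        simp only [ENNReal.toReal_mul, ENNReal.toReal_div]
        norm_num

end Stopping

theorem statement6_general (d : ℕ) (hd : 0 < d) (ω : TransParam d)
    (w : (Fin d → ℝ) → ℝ) (hw : ∀ x, 0 ≤ w x) (hwl : LocallyIntegrable w volume)
    (𝒬 : Set (DyadicCube d)) (Q₀ : DyadicCube d) :
    (∀ R : DyadicCube d,
      (∑' Q : {Q : DyadicCube d // Q ∈ stopFam ω w 𝒬 Q₀ ∧ Q.set ω ⊆ R.set ω},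
        ENNReal.ofReal (DyadicCube.vol Q.1)) ≤ ENNReal.ofReal ((4 / 3) * R.vol)) ∧
    (∀ R ∈ stopFam ω w 𝒬 Q₀,
      (∫⁻ x, (∑' Q : {Q : DyadicCube d // Q ∈ stopFam ω w 𝒬 Q₀ ∧ Q.set ω ⊆ R.set ω},
          Set.indicator ((Q.1).set ω) (fun _ => (1:ℝ≥0∞)) x) ^ 2) ≤
        ENNReal.ofReal (4 * R.vol)) := by
  refine ⟨fun R => ?_, fun R _ => ?_⟩
  · rw [ENNReal.ofReal_mul (by norm_num), ENNReal.ofReal_div_of_pos (by norm_num),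
      ENNReal.ofReal_ofNat, ENNReal.ofReal_ofNat, ← DyadicCube.volume_set ω]
    simpa only [DyadicCube.volume_set] using tsum_volume_stopFam_le hd hw hwl R
  · rw [ENNReal.ofReal_mul (by norm_num), ENNReal.ofReal_ofNat, ← DyadicCube.volume_set ω]
    exact lintegral_sq_tsum_indicator_stopFam_le hd hw hwl R

/-- **Carleson packing of the stopping cubes.** For the stopping family
`𝒢* = 𝒢*(Q₀)`: (i) `Σ_{Q∈𝒢*, Q⊆R} |Q| ≤ (4/3)|R|` for every `R ∈ 𝒟` (in particular for
every `R ∈ 𝒢*`); (ii) `‖Σ_{Q∈𝒢*, Q⊆R} 1_Q‖_{L²} ≤ 2|R|^{1/2}` for every `R ∈ 𝒢*`. -/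
theorem statement6 (d : ℕ) (hd : 0 < d) (ω : TransParam d)
    (w : (Fin d → ℝ) → ℝ) (hw : ∀ x, 0 ≤ w x) (hwl : LocallyIntegrable w volume)
    (𝒬 : Set (DyadicCube d)) (Q₀ : DyadicCube d) (hQ₀ : Q₀ ∈ 𝒬) :
    (∀ R : DyadicCube d,
      (∑' Q : {Q : DyadicCube d // Q ∈ stopFam ω w 𝒬 Q₀ ∧ Q.set ω ⊆ R.set ω},
        ENNReal.ofReal (DyadicCube.vol Q.1)) ≤ ENNReal.ofReal ((4 / 3) * R.vol)) ∧
    (∀ R ∈ stopFam ω w 𝒬 Q₀,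
      (∫⁻ x, (∑' Q : {Q : DyadicCube d // Q ∈ stopFam ω w 𝒬 Q₀ ∧ Q.set ω ⊆ R.set ω},
          Set.indicator ((Q.1).set ω) (fun _ => (1:ℝ≥0∞)) x) ^ 2) ≤
        ENNReal.ofReal (4 * R.vol)) :=
  statement6_general d hd ω w hw hwl 𝒬 Q₀

end
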